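/- Let ⟨S, ·, ≤, ♯⟩ be a finite set with a binary operation, a partial order, and a map ♯ defined on idempotents. Suppose there exists a function α : ℕ → ℕ such that for every word u ∈ S^+, every n-under-computation for u of height at most 3 with value a, and every α(n)-over-computation for u of height at most 3 with value b, one has a ≤ b. Then S is a stabilisation semigroup: · is associative and compatible with ≤, ♯ maps idempotents to idempotents, ♯ is monotone on idempotents, e^♯ ≤ e, (e^♯)^♯ = e^♯, and (a·b)^♯ = a·(b·a)^♯·b whenever a·b and b·a are idempotent. -/
import Mathlib


/-- Ordered unranked trees labelled by `S`. -/
inductive CTree (S : Type*) where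
  | node : S → List (CTree S) → CTree S

/-- The value (root label) of a tree. -/
def CTree.value {S : Type*} : CTree S → S
  | .node v _ => v

mutual
  /-- Height of a tree, leaves not counted (a single leaf has height `0`). -/
  def CTree.height {S : Type*} : CTree S → ℕ
    | .node _ ts => CTree.heightList ts
  /-- Auxiliary: max over a list of children of (height + 1). -/
  def CTree.heightList {S : Type*} : List (CTree S) → ℕ
    | [] => 0
    | t :: ts => max (CTree.height t + 1) (CTree.heightList ts)
end

/-- `n`-over-computations for a word, for a raw product `mul`, order `le`, and
stabilisation `stab`. -/
inductive IsOverComp {S : Type*} (mul : S → S → S) (le : S → S → Prop)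
    (stab : S → S) (n : ℕ) : CTree S → List S → Prop
  | leaf {a v : S} : le a v → IsOverComp mul le stab n (.node v []) [a]
  | binary {v : S} {t₁ t₂ : CTree S} {u₁ u₂ : List S} :
      IsOverComp mul le stab n t₁ u₁ → IsOverComp mul le stab n t₂ u₂ →
      le (mul t₁.value t₂.value) v →
      IsOverComp mul le stab n (.node v [t₁, t₂]) (u₁ ++ u₂)
  | idem {v e : S} {ps : List (CTree S × List S)} :
      2 ≤ ps.length → ps.length ≤ n → mul e e = e →
      (∀ p ∈ ps, (p.1).value = e) →
      (∀ p ∈ ps, IsOverComp mul le stab n p.1 p.2) →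
      le e v →
      IsOverComp mul le stab n (.node v (ps.map Prod.fst)) ((ps.map Prod.snd).flatten)
  | stabilisation {v e : S} {ps : List (CTree S × List S)} :
      n < ps.length → mul e e = e →
      (∀ p ∈ ps, (p.1).value = e) →
      (∀ p ∈ ps, IsOverComp mul le stab n p.1 p.2) →
      le (stab e) v →
      IsOverComp mul le stab n (.node v (ps.map Prod.fst)) ((ps.map Prod.snd).flatten)

/-- `n`-under-computations for a word (dual inequalities). -/
inductive IsUnderComp {S : Type*} (mul : S → S → S) (le : S → S → Prop)
    (stab : S → S) (n : ℕ) : CTree S → List S → Prop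
  | leaf {a v : S} : le v a → IsUnderComp mul le stab n (.node v []) [a]
  | binary {v : S} {t₁ t₂ : CTree S} {u₁ u₂ : List S} :
      IsUnderComp mul le stab n t₁ u₁ → IsUnderComp mul le stab n t₂ u₂ →
      le v (mul t₁.value t₂.value) →
      IsUnderComp mul le stab n (.node v [t₁, t₂]) (u₁ ++ u₂)
  | idem {v e : S} {ps : List (CTree S × List S)} :
      2 ≤ ps.length → ps.length ≤ n → mul e e = e →
      (∀ p ∈ ps, (p.1).value = e) →
      (∀ p ∈ ps, IsUnderComp mul le stab n p.1 p.2) →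
      le v e →
      IsUnderComp mul le stab n (.node v (ps.map Prod.fst)) ((ps.map Prod.snd).flatten)
  | stabilisation {v e : S} {ps : List (CTree S × List S)} :
      n < ps.length → mul e e = e →
      (∀ p ∈ ps, (p.1).value = e) →
      (∀ p ∈ ps, IsUnderComp mul le stab n p.1 p.2) →
      le v (stab e) →
      IsUnderComp mul le stab n (.node v (ps.map Prod.fst)) ((ps.map Prod.snd).flatten)

set_option linter.unusedSectionVars false

section Helpers

variable {S : Type*} [PartialOrder S] {mul : S → S → S} {stab : S → S} {n : ℕ}

lemma CTree.height_node (v : S) (l : List (CTree S)) :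
    (CTree.node v l).height = CTree.heightList l := rfl

lemma CTree.heightList_nil : CTree.heightList ([] : List (CTree S)) = 0 := rfl

lemma CTree.heightList_cons (t : CTree S) (ts : List (CTree S)) :
    CTree.heightList (t :: ts) = max (t.height + 1) (CTree.heightList ts) := rfl

lemma CTree.height_leaf (v : S) : (CTree.node v ([] : List (CTree S))).height = 0 := rfl

lemma CTree.height_node₂_le {v : S} {t₁ t₂ : CTree S} {m : ℕ}
    (h₁ : t₁.height ≤ m) (h₂ : t₂.height ≤ m) :
    (CTree.node v [t₁, t₂]).height ≤ m + 1 := by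
  rw [CTree.height_node, CTree.heightList_cons, CTree.heightList_cons, CTree.heightList_nil]
  omega

lemma CTree.height_rep_le {v : S} {t : CTree S} {m : ℕ} (h : t.height + 1 ≤ m) (k : ℕ) :
    (CTree.node v (List.replicate k t)).height ≤ m := by
  rw [CTree.height_node]
  induction k with
  | zero => rw [List.replicate_zero, CTree.heightList_nil]; omega
  | succ k ih => rw [List.replicate_succ, CTree.heightList_cons]; omega

lemma List.flat_rep (x : S) (k : ℕ) :
    (List.replicate k ([x] : List S)).flatten = List.replicate k x := by
  induction k with
  | zero => rfl
  | succ k ih => simp [List.replicate_succ, ih]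

lemma List.flat_rep_rep (x : S) (k : ℕ) :
    ∀ m : ℕ, (List.replicate m (List.replicate k x)).flatten = List.replicate (m * k) x := by
  intro m; induction m with
  | zero => simp
  | succ m ih =>
      rw [List.replicate_succ, List.flatten_cons, ih, Nat.succ_mul, Nat.add_comm,
        List.replicate_add]

lemma List.cons_flat (x y : S) (k : ℕ) :
    x :: (List.replicate k [y, x]).flatten = (List.replicate k [x, y]).flatten ++ [x] := by
  induction k with
  | zero => rfl
  | succ k ih => simp [List.replicate_succ] at ih ⊢; simp [ih]

lemma List.rep_ne_nil (x : S) {m : ℕ} (h : m ≠ 0) : List.replicate m x ≠ [] := by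
  simp [h]

lemma under_stab_rep {k : ℕ} (hk : n < k) {e v : S} (he : mul e e = e)
    {t : CTree S} {w : List S} (ht : t.value = e)
    (hc : IsUnderComp mul (· ≤ ·) stab n t w) (hv : v ≤ stab e) :
    IsUnderComp mul (· ≤ ·) stab n (.node v (List.replicate k t))
      ((List.replicate k w).flatten) := by
  have h := IsUnderComp.stabilisation (mul := mul) (le := (· ≤ ·)) (stab := stab) (n := n)
      (v := v) (e := e) (ps := List.replicate k (t, w))
      (by simpa using hk) he
      (fun p hp => by rw [List.eq_of_mem_replicate hp]; exact ht)
      (fun p hp => by rw [List.eq_of_mem_replicate hp]; exact hc) hv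
  simpa [List.map_replicate] using h

lemma over_stab_rep {k : ℕ} (hk : n < k) {e v : S} (he : mul e e = e)
    {t : CTree S} {w : List S} (ht : t.value = e)
    (hc : IsOverComp mul (· ≤ ·) stab n t w) (hv : stab e ≤ v) :
    IsOverComp mul (· ≤ ·) stab n (.node v (List.replicate k t))
      ((List.replicate k w).flatten) := by
  have h := IsOverComp.stabilisation (mul := mul) (le := (· ≤ ·)) (stab := stab) (n := n)
      (v := v) (e := e) (ps := List.replicate k (t, w))
      (by simpa using hk) he
      (fun p hp => by rw [List.eq_of_mem_replicate hp]; exact ht)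
      (fun p hp => by rw [List.eq_of_mem_replicate hp]; exact hc) hv
  simpa [List.map_replicate] using h

lemma CTree.height_rep_leaf_le (v x : S) (k : ℕ) :
    (CTree.node v (List.replicate k (CTree.node x ([] : List (CTree S))))).height ≤ 1 :=
  CTree.height_rep_le (by simp [CTree.height_leaf]) k

lemma CTree.height_pair_le (v x y : S) :
    (CTree.node v [CTree.node x ([] : List (CTree S)),
      CTree.node y ([] : List (CTree S))]).height ≤ 1 := by
  rw [CTree.height_node, CTree.heightList_cons, CTree.heightList_cons, CTree.heightList_nil,
    CTree.height_leaf, CTree.height_leaf]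
  omega

lemma CTree.height_rep_pair_le (v w x y : S) (k : ℕ) :
    (CTree.node v (List.replicate k (CTree.node w [CTree.node x ([] : List (CTree S)),
      CTree.node y ([] : List (CTree S))]))).height ≤ 2 :=
  CTree.height_rep_le (by have := CTree.height_pair_le w x y; omega) k

lemma CTree.height_rep_rep_le (v w x : S) (k m : ℕ) :
    (CTree.node v (List.replicate k (CTree.node w (List.replicate m
      (CTree.node x ([] : List (CTree S))))))).height ≤ 2 :=
  CTree.height_rep_le (by have := CTree.height_rep_leaf_le w x m; omega) k

end Helpers
/-- If values of `n`-under-computations of height `≤ 3` are always `≤` values of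
`α(n)`-over-computations of height `≤ 3` over the same word, then
`⟨S, mul, ≤, stab⟩` is a stabilisation semigroup. -/
theorem unicity_to_axioms {S : Type*} [Fintype S] [PartialOrder S]
    (mul : S → S → S) (stab : S → S)
    (hcomp : ∃ α : ℕ → ℕ, ∀ (n : ℕ) (u : List S), u ≠ [] →
      ∀ (T T' : CTree S),
        IsUnderComp mul (· ≤ ·) stab n T u → T.height ≤ 3 →
        IsOverComp mul (· ≤ ·) stab (α n) T' u → T'.height ≤ 3 →
        T.value ≤ T'.value) :
    (∀ a b c : S, mul (mul a b) c = mul a (mul b c)) ∧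
    (∀ a a' b b' : S, a ≤ a' → b ≤ b' → mul a b ≤ mul a' b') ∧
    (∀ e : S, mul e e = e → mul (stab e) (stab e) = stab e) ∧
    (∀ e f : S, mul e e = e → mul f f = f → e ≤ f → stab e ≤ stab f) ∧
    (∀ e : S, mul e e = e → stab e ≤ e) ∧
    (∀ e : S, mul e e = e → stab (stab e) = stab e) ∧
    (∀ a b : S, mul (mul a b) (mul a b) = mul a b → mul (mul b a) (mul b a) = mul b a →
      stab (mul a b) = mul a (mul (stab (mul b a)) b)) := by
  obtain ⟨α, key⟩ := hcomp
  set N := α 0 + 1 with hNdef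
  have hN0 : 0 < N := Nat.succ_pos _
  have hαN : α 0 < N := Nat.lt_succ_self _
  -- associativity
  have hassoc : ∀ a b c : S, mul (mul a b) c = mul a (mul b c) := by
    intro a b c
    have hLu : IsUnderComp mul (· ≤ ·) stab 0
        (.node (mul (mul a b) c)
          [.node (mul a b) [.node a [], .node b []], .node c []]) [a, b, c] :=
      IsUnderComp.binary (u₁ := [a, b]) (u₂ := [c])
        (IsUnderComp.binary (u₁ := [a]) (u₂ := [b]) (.leaf le_rfl) (.leaf le_rfl) le_rfl)
        (.leaf le_rfl) le_rfl
    have hLo : IsOverComp mul (· ≤ ·) stab (α 0)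
        (.node (mul (mul a b) c)
          [.node (mul a b) [.node a [], .node b []], .node c []]) [a, b, c] :=
      IsOverComp.binary (u₁ := [a, b]) (u₂ := [c])
        (IsOverComp.binary (u₁ := [a]) (u₂ := [b]) (.leaf le_rfl) (.leaf le_rfl) le_rfl)
        (.leaf le_rfl) le_rfl
    have hRu : IsUnderComp mul (· ≤ ·) stab 0
        (.node (mul a (mul b c))
          [.node a [], .node (mul b c) [.node b [], .node c []]]) [a, b, c] :=
      IsUnderComp.binary (u₁ := [a]) (u₂ := [b, c]) (.leaf le_rfl)
        (IsUnderComp.binary (u₁ := [b]) (u₂ := [c]) (.leaf le_rfl) (.leaf le_rfl) le_rfl)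
        le_rfl
    have hRo : IsOverComp mul (· ≤ ·) stab (α 0)
        (.node (mul a (mul b c))
          [.node a [], .node (mul b c) [.node b [], .node c []]]) [a, b, c] :=
      IsOverComp.binary (u₁ := [a]) (u₂ := [b, c]) (.leaf le_rfl)
        (IsOverComp.binary (u₁ := [b]) (u₂ := [c]) (.leaf le_rfl) (.leaf le_rfl) le_rfl)
        le_rfl
    have hh1 : (CTree.node (mul (mul a b) c)
        [CTree.node (mul a b) [CTree.node a [], CTree.node b []],
         CTree.node c ([] : List (CTree S))]).height ≤ 3 :=
      (CTree.height_node₂_le ((CTree.height_pair_le _ a b).trans one_le_two)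
        (by rw [CTree.height_leaf]; omega))
    have hh2 : (CTree.node (mul a (mul b c))
        [CTree.node a ([] : List (CTree S)),
         CTree.node (mul b c) [CTree.node b [], CTree.node c []]]).height ≤ 3 :=
      (CTree.height_node₂_le (by rw [CTree.height_leaf]; omega)
        ((CTree.height_pair_le _ b c).trans one_le_two))
    exact le_antisymm
      (key 0 [a, b, c] (by simp) _ _ hLu hh1 hRo hh2)
      (key 0 [a, b, c] (by simp) _ _ hRu hh2 hLo hh1)
  -- monotonicity of mul
  have hmono : ∀ a a' b b' : S, a ≤ a' → b ≤ b' → mul a b ≤ mul a' b' := by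
    intro a a' b b' ha hb
    have hu : IsUnderComp mul (· ≤ ·) stab 0
        (.node (mul a b) [.node a [], .node b []]) [a', b'] :=
      IsUnderComp.binary (u₁ := [a']) (u₂ := [b']) (.leaf ha) (.leaf hb) le_rfl
    have ho : IsOverComp mul (· ≤ ·) stab (α 0)
        (.node (mul a' b') [.node a' [], .node b' []]) [a', b'] :=
      IsOverComp.binary (u₁ := [a']) (u₂ := [b']) (.leaf le_rfl) (.leaf le_rfl) le_rfl
    exact key 0 [a', b'] (by simp) _ _ hu ((CTree.height_pair_le _ a b).trans (by omega))
      ho ((CTree.height_pair_le _ a' b').trans (by omega))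
  -- single stabilisation nodes over replicated leaves
  have hUstab : ∀ (e : S), mul e e = e → ∀ k, 0 < k → IsUnderComp mul (· ≤ ·) stab 0
      (.node (stab e) (List.replicate k (.node e []))) (List.replicate k e) := by
    intro e he k hk
    have := under_stab_rep (mul := mul) (stab := stab) hk he
      (t := CTree.node e []) (w := [e]) rfl (.leaf le_rfl) le_rfl
    simpa [List.flat_rep] using this
  have hOstab : ∀ (e : S), mul e e = e → ∀ k, α 0 < k → IsOverComp mul (· ≤ ·) stab (α 0)
      (.node (stab e) (List.replicate k (.node e []))) (List.replicate k e) := by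
    intro e he k hk
    have := over_stab_rep (mul := mul) (stab := stab) hk he
      (t := CTree.node e []) (w := [e]) rfl (.leaf le_rfl) le_rfl
    simpa [List.flat_rep] using this
  -- stab e is idempotent
  have h3 : ∀ e : S, mul e e = e → mul (stab e) (stab e) = stab e := by
    intro e he
    have hle : mul (stab e) (stab e) ≤ stab e := by
      have hu : IsUnderComp mul (· ≤ ·) stab 0
          (.node (mul (stab e) (stab e))
            [.node (stab e) (List.replicate N (.node e [])),
             .node (stab e) (List.replicate N (.node e []))])
          (List.replicate (N + N) e) := by
        have := IsUnderComp.binary (hUstab e he N hN0) (hUstab e he N hN0)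
          (le_refl (mul (stab e) (stab e)))
        rw [List.replicate_add (n := N) (m := N)]
        exact this
      exact key 0 _ (List.rep_ne_nil e (by omega)) _ _ hu
        ((CTree.height_node₂_le (CTree.height_rep_leaf_le _ e N)
          (CTree.height_rep_leaf_le _ e N)).trans (by omega))
        (hOstab e he (N + N) (by omega))
        ((CTree.height_rep_leaf_le _ e (N + N)).trans (by omega))
    have hge : stab e ≤ mul (stab e) (stab e) := by
      have ho : IsOverComp mul (· ≤ ·) stab (α 0)
          (.node (mul (stab e) (stab e))
            [.node (stab e) (List.replicate N (.node e [])),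
             .node (stab e) (List.replicate N (.node e []))])
          (List.replicate (N + N) e) := by
        have := IsOverComp.binary (hOstab e he N hαN) (hOstab e he N hαN)
          (le_refl (mul (stab e) (stab e)))
        rw [List.replicate_add (n := N) (m := N)]
        exact this
      exact key 0 _ (List.rep_ne_nil e (by omega)) _ _
        (hUstab e he (N + N) (by omega))
        ((CTree.height_rep_leaf_le _ e (N + N)).trans (by omega)) ho
        ((CTree.height_node₂_le (CTree.height_rep_leaf_le _ e N)
          (CTree.height_rep_leaf_le _ e N)).trans (by omega))
    exact le_antisymm hle hge
  -- monotonicity of stab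
  have h4 : ∀ e f : S, mul e e = e → mul f f = f → e ≤ f → stab e ≤ stab f := by
    intro e f he hf hef
    have hu : IsUnderComp mul (· ≤ ·) stab 0
        (.node (stab e) (List.replicate N (.node e []))) (List.replicate N f) := by
      have := under_stab_rep (mul := mul) (stab := stab) hN0 he
        (t := CTree.node e []) (w := [f]) rfl (.leaf hef) le_rfl
      simpa [List.flat_rep] using this
    exact key 0 _ (List.rep_ne_nil f (by omega)) _ _ hu
      ((CTree.height_rep_leaf_le _ e N).trans (by omega))
      (hOstab f hf N hαN)
      ((CTree.height_rep_leaf_le _ f N).trans (by omega))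
  -- stab e ≤ e
  have h5 : ∀ e : S, mul e e = e → stab e ≤ e := by
    intro e he
    have ho : IsOverComp mul (· ≤ ·) stab (α 0)
        (.node e [.node e [], .node e []]) (List.replicate 2 e) :=
      IsOverComp.binary (u₁ := [e]) (u₂ := [e]) (.leaf le_rfl) (.leaf le_rfl) he.le
    exact key 0 _ (List.rep_ne_nil e (by omega)) _ _ (hUstab e he 2 (by omega))
      ((CTree.height_rep_leaf_le _ e 2).trans (by omega)) ho
      ((CTree.height_pair_le e e e).trans (by omega))
  -- stab (stab e) = stab e
  have h6 : ∀ e : S, mul e e = e → stab (stab e) = stab e := by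
    intro e he
    have hE : mul (stab e) (stab e) = stab e := h3 e he
    have hNN0 : N * N ≠ 0 := Nat.mul_ne_zero (by omega) (by omega)
    have hαNN : α 0 < N * N := lt_of_lt_of_le hαN (Nat.le_mul_of_pos_right _ hN0)
    have hle : stab (stab e) ≤ stab e := by
      have hu : IsUnderComp mul (· ≤ ·) stab 0
          (.node (stab (stab e)) (List.replicate N
            (.node (stab e) (List.replicate N (.node e [])))))
          (List.replicate (N * N) e) := by
        have := under_stab_rep (mul := mul) (stab := stab) hN0 hE
          (t := CTree.node (stab e) (List.replicate N (CTree.node e [])))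
          (w := List.replicate N e) rfl (hUstab e he N hN0) le_rfl
        simpa [List.flat_rep_rep] using this
      exact key 0 _ (List.rep_ne_nil e hNN0) _ _ hu
        ((CTree.height_rep_rep_le _ _ e N N).trans (by omega))
        (hOstab e he (N * N) hαNN)
        ((CTree.height_rep_leaf_le _ e (N * N)).trans (by omega))
    have hge : stab e ≤ stab (stab e) := by
      have ho : IsOverComp mul (· ≤ ·) stab (α 0)
          (.node (stab (stab e)) (List.replicate N
            (.node (stab e) (List.replicate N (.node e [])))))
          (List.replicate (N * N) e) := by
        have := over_stab_rep (mul := mul) (stab := stab) hαN hE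
          (t := CTree.node (stab e) (List.replicate N (CTree.node e [])))
          (w := List.replicate N e) rfl (hOstab e he N hαN) le_rfl
        simpa [List.flat_rep_rep] using this
      exact key 0 _ (List.rep_ne_nil e hNN0) _ _
        (hUstab e he (N * N) (by positivity))
        ((CTree.height_rep_leaf_le _ e (N * N)).trans (by omega)) ho
        ((CTree.height_rep_rep_le _ _ e N N).trans (by omega))
    exact le_antisymm hle hge
  -- e · stab e = stab e for idempotent e
  have hL : ∀ e : S, mul e e = e → mul e (stab e) = stab e := by
    intro e he
    have h1 : mul e (stab e) ≤ stab e := by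
      have hu : IsUnderComp mul (· ≤ ·) stab 0
          (.node (mul e (stab e))
            [.node e [], .node (stab e) (List.replicate N (.node e []))])
          (List.replicate (N + 1) e) := by
        have := IsUnderComp.binary (u₁ := [e]) (.leaf le_rfl) (hUstab e he N hN0)
          (le_refl (mul e (stab e)))
        simpa [List.replicate_succ] using this
      exact key 0 _ (List.rep_ne_nil e (by omega)) _ _ hu
        ((CTree.height_node₂_le (by rw [CTree.height_leaf]; omega)
          ((CTree.height_rep_leaf_le _ e N).trans one_le_two)).trans (by omega))
        (hOstab e he (N + 1) (by omega))
        ((CTree.height_rep_leaf_le _ e (N + 1)).trans (by omega))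
    have h2 : stab e ≤ mul e (stab e) := by
      have ho : IsOverComp mul (· ≤ ·) stab (α 0)
          (.node (mul e (stab e))
            [.node e [], .node (stab e) (List.replicate N (.node e []))])
          (List.replicate (N + 1) e) := by
        have := IsOverComp.binary (u₁ := [e]) (.leaf le_rfl) (hOstab e he N hαN)
          (le_refl (mul e (stab e)))
        simpa [List.replicate_succ] using this
      exact key 0 _ (List.rep_ne_nil e (by omega)) _ _
        (hUstab e he (N + 1) (by omega))
        ((CTree.height_rep_leaf_le _ e (N + 1)).trans (by omega)) ho
        ((CTree.height_node₂_le (by rw [CTree.height_leaf]; omega)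
          ((CTree.height_rep_leaf_le _ e N).trans one_le_two)).trans (by omega))
    exact le_antisymm h1 h2
  -- exchange: b · (ab)♯ = (ba)♯ · b
  have hex : ∀ a b : S, mul (mul a b) (mul a b) = mul a b →
      mul (mul b a) (mul b a) = mul b a →
      mul b (stab (mul a b)) = mul (stab (mul b a)) b := by
    intro a b hab hba
    have hPu : IsUnderComp mul (· ≤ ·) stab 0
        (.node (mul a b) [.node a [], .node b []]) [a, b] :=
      IsUnderComp.binary (u₁ := [a]) (u₂ := [b]) (.leaf le_rfl) (.leaf le_rfl) le_rfl
    have hPo : IsOverComp mul (· ≤ ·) stab (α 0)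
        (.node (mul a b) [.node a [], .node b []]) [a, b] :=
      IsOverComp.binary (u₁ := [a]) (u₂ := [b]) (.leaf le_rfl) (.leaf le_rfl) le_rfl
    have hQu : IsUnderComp mul (· ≤ ·) stab 0
        (.node (mul b a) [.node b [], .node a []]) [b, a] :=
      IsUnderComp.binary (u₁ := [b]) (u₂ := [a]) (.leaf le_rfl) (.leaf le_rfl) le_rfl
    have hQo : IsOverComp mul (· ≤ ·) stab (α 0)
        (.node (mul b a) [.node b [], .node a []]) [b, a] :=
      IsOverComp.binary (u₁ := [b]) (u₂ := [a]) (.leaf le_rfl) (.leaf le_rfl) le_rfl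
    have hABu : IsUnderComp mul (· ≤ ·) stab 0
        (.node (stab (mul a b)) (List.replicate N (.node (mul a b) [.node a [], .node b []])))
        ((List.replicate N [a, b]).flatten) :=
      under_stab_rep hN0 hab rfl hPu le_rfl
    have hABo : IsOverComp mul (· ≤ ·) stab (α 0)
        (.node (stab (mul a b)) (List.replicate N (.node (mul a b) [.node a [], .node b []])))
        ((List.replicate N [a, b]).flatten) :=
      over_stab_rep hαN hab rfl hPo le_rfl
    have hBAu : IsUnderComp mul (· ≤ ·) stab 0
        (.node (stab (mul b a)) (List.replicate N (.node (mul b a) [.node b [], .node a []])))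
        ((List.replicate N [b, a]).flatten) :=
      under_stab_rep hN0 hba rfl hQu le_rfl
    have hBAo : IsOverComp mul (· ≤ ·) stab (α 0)
        (.node (stab (mul b a)) (List.replicate N (.node (mul b a) [.node b [], .node a []])))
        ((List.replicate N [b, a]).flatten) :=
      over_stab_rep hαN hba rfl hQo le_rfl
    have hword : (b : S) :: (List.replicate N [a, b]).flatten
        = (List.replicate N [b, a]).flatten ++ [b] := List.cons_flat b a N
    have hhL : (CTree.node (mul b (stab (mul a b)))
        [CTree.node b ([] : List (CTree S)),
         CTree.node (stab (mul a b)) (List.replicate N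
           (CTree.node (mul a b) [CTree.node a [], CTree.node b []]))]).height ≤ 3 :=
      CTree.height_node₂_le (by rw [CTree.height_leaf]; omega)
        (CTree.height_rep_pair_le _ _ a b N)
    have hhR : (CTree.node (mul (stab (mul b a)) b)
        [CTree.node (stab (mul b a)) (List.replicate N
           (CTree.node (mul b a) [CTree.node b [], CTree.node a []])),
         CTree.node b ([] : List (CTree S))]).height ≤ 3 :=
      CTree.height_node₂_le (CTree.height_rep_pair_le _ _ b a N)
        (by rw [CTree.height_leaf]; omega)
    have h1 : mul b (stab (mul a b)) ≤ mul (stab (mul b a)) b := by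
      have hu : IsUnderComp mul (· ≤ ·) stab 0
          (.node (mul b (stab (mul a b)))
            [.node b [], .node (stab (mul a b)) (List.replicate N
              (.node (mul a b) [.node a [], .node b []]))])
          ((b : S) :: (List.replicate N [a, b]).flatten) :=
        IsUnderComp.binary (u₁ := [b]) (.leaf le_rfl) hABu le_rfl
      have ho : IsOverComp mul (· ≤ ·) stab (α 0)
          (.node (mul (stab (mul b a)) b)
            [.node (stab (mul b a)) (List.replicate N
              (.node (mul b a) [.node b [], .node a []])), .node b []])
          ((b : S) :: (List.replicate N [a, b]).flatten) := by
        rw [hword]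
        exact IsOverComp.binary hBAo (.leaf le_rfl) le_rfl
      exact key 0 _ (by simp) _ _ hu hhL ho hhR
    have h2 : mul (stab (mul b a)) b ≤ mul b (stab (mul a b)) := by
      have hu : IsUnderComp mul (· ≤ ·) stab 0
          (.node (mul (stab (mul b a)) b)
            [.node (stab (mul b a)) (List.replicate N
              (.node (mul b a) [.node b [], .node a []])), .node b []])
          ((b : S) :: (List.replicate N [a, b]).flatten) := by
        rw [hword]
        exact IsUnderComp.binary hBAu (.leaf le_rfl) le_rfl
      have ho : IsOverComp mul (· ≤ ·) stab (α 0)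
          (.node (mul b (stab (mul a b)))
            [.node b [], .node (stab (mul a b)) (List.replicate N
              (.node (mul a b) [.node a [], .node b []]))])
          ((b : S) :: (List.replicate N [a, b]).flatten) :=
        IsOverComp.binary (u₁ := [b]) (.leaf le_rfl) hABo le_rfl
      exact key 0 _ (by simp) _ _ hu hhR ho hhL
    exact le_antisymm h1 h2
  -- the ♯ axiom
  have h7 : ∀ a b : S, mul (mul a b) (mul a b) = mul a b →
      mul (mul b a) (mul b a) = mul b a →
      stab (mul a b) = mul a (mul (stab (mul b a)) b) := by
    intro a b hab hba
    calc stab (mul a b) = mul (mul a b) (stab (mul a b)) := (hL (mul a b) hab).symm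
      _ = mul a (mul b (stab (mul a b))) := hassoc a b (stab (mul a b))
      _ = mul a (mul (stab (mul b a)) b) := by rw [hex a b hab hba]
  exact ⟨hassoc, hmono, h3, h4, h5, h6, h7⟩
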